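/- Let 𝒳 ⊂ ℙ^3 be a smooth hypersurface (surface) of degree d, and suppose 𝒳 admits the automorphism g = [D(a, b, 1, 1)] with a, b ∈ k^× \ {1} and a ≠ b. Then the fixed locus Fix(g) contains at least d points, i.e. |Fix(g)| ≥ d. -/

import Mathlib

open MvPolynomial

variable {k : Type*} [Field k]

/-- The substitution action of a matrix `A` on polynomials:
`(matSubst A) F = A*F = F(∑ j A 0 j • X j, …)`, i.e. `X i ↦ ∑ j, A i j • X j`. -/
noncomputable def matSubst {N : ℕ} (A : Matrix (Fin N) (Fin N) k) :
    MvPolynomial (Fin N) k →ₐ[k] MvPolynomial (Fin N) k :=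
  aeval fun i => ∑ j, A i j • X j

/-- `F` defines a smooth hypersurface of degree `d` in `ℙ^{N-1}`:
`F` is homogeneous of degree `d`, irreducible (so that its zero locus is a variety), and
satisfies the Jacobian criterion (no nonzero common zero of all partial derivatives). -/
def IsSmoothHypersurface {N : ℕ} (F : MvPolynomial (Fin N) k) (d : ℕ) : Prop :=
  F.IsHomogeneous d ∧ Irreducible F ∧
    ∀ v : Fin N → k, v ≠ 0 → ∃ i, eval v (pderiv i F) ≠ 0

/-- The set of points of `ℙ^{N-1}` lying on the hypersurface `F = 0`. -/
def hypPoints {N : ℕ} (F : MvPolynomial (Fin N) k) :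
    Set (Projectivization k (Fin N → k)) :=
  {P | eval P.rep F = 0}

/-- The fixed locus on the hypersurface `F = 0` of the projective transformation
induced by the matrix `A`. -/
def projFixedPoints {N : ℕ} (F : MvPolynomial (Fin N) k)
    (A : Matrix (Fin N) (Fin N) k) : Set (Projectivization k (Fin N → k)) :=
  {P | P ∈ hypPoints F ∧ ∃ c : k, A.mulVec P.rep = c • P.rep}

/-- The order of the class of the matrix `A` in `PGL_N(k)`: the least `m > 0` such that
`A ^ m` is a scalar matrix (and `0` if there is no such `m`). -/
noncomputable def projOrder {N : ℕ} (A : Matrix (Fin N) (Fin N) k) : ℕ :=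
  sInf {m : ℕ | 0 < m ∧ ∃ c : k, A ^ m = c • (1 : Matrix (Fin N) (Fin N) k)}

/-- The affine cone in `k^N` over a set of points of `ℙ^{N-1}`. -/
def projCone {N : ℕ} (S : Set (Projectivization k (Fin N → k))) :
    Set (Fin N → k) :=
  {v | ∃ h : v ≠ 0, Projectivization.mk k v h ∈ S} ∪ {0}

/-- The dimension of (the affine cone over) a set of points of `ℙ^{N-1}`, as the Krull
dimension of the coordinate ring of its Zariski closure.  The projective dimension of the
set is this number minus one. -/
noncomputable def coneDim {N : ℕ} (S : Set (Projectivization k (Fin N → k))) :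
    WithBot (WithTop ℕ) :=
  ringKrullDim (MvPolynomial (Fin N) k ⧸ vanishingIdeal k (projCone S))

/-- The fixed locus of (the projective transformation induced by) `A` on the hypersurface
`F = 0` has codimension `c` in the hypersurface. -/
def FixCodim {N : ℕ} (F : MvPolynomial (Fin N) k)
    (A : Matrix (Fin N) (Fin N) k) (c : ℕ) : Prop :=
  coneDim (projFixedPoints F A) + (c : WithBot (WithTop ℕ)) = coneDim (hypPoints F)

/-- The projective transformation induced by `A` maps the hypersurface `F = 0` onto
itself. -/
def PreservesHypersurface {N : ℕ} (F : MvPolynomial (Fin N) k)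
    (A : Matrix (Fin N) (Fin N) k) : Prop :=
  ∀ v : Fin N → k, eval v F = 0 ↔ eval (A.mulVec v) F = 0

/-- The subset of the total fraction field of `k[X_0,…,X_{N-1}]/(F)` consisting of the
degree-zero fractions `G/H` (with `G`, `H` homogeneous of the same degree) which are
invariant under the projective transformation induced by `A`; this is (the carrier of) the
function field of the quotient of the hypersurface `F = 0` by the cyclic group generated
by `[A]`. -/
noncomputable def toFrac {N : ℕ} (F G : MvPolynomial (Fin N) k) :
    FractionRing (MvPolynomial (Fin N) k ⧸ Ideal.span {F}) :=
  algebraMap (MvPolynomial (Fin N) k ⧸ Ideal.span {F}) _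
    (Ideal.Quotient.mk (Ideal.span {F}) G)

def invDegZeroFrac {N : ℕ} (F : MvPolynomial (Fin N) k)
    (A : Matrix (Fin N) (Fin N) k) :
    Set (FractionRing (MvPolynomial (Fin N) k ⧸ Ideal.span {F})) :=
  {x | ∃ (u : ℕ) (G H : MvPolynomial (Fin N) k),
    G.IsHomogeneous u ∧ H.IsHomogeneous u ∧
    matSubst A G * H - G * matSubst A H ∈ Ideal.span {F} ∧
    toFrac F H ≠ 0 ∧ x * toFrac F H = toFrac F G}

/-- The quotient of the hypersurface `F = 0` in `ℙ^{N-1}` by the cyclic group generated by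
the projective transformation `[A]` is a rational variety of dimension `n`: its function
field — the field of invariant degree-zero fractions — is `k`-isomorphic to the rational
function field `k(t_1, …, t_n)`. -/
def QuotientIsRational {N : ℕ} (n : ℕ) (F : MvPolynomial (Fin N) k)
    (A : Matrix (Fin N) (Fin N) k) : Prop :=
  ∀ [inst : (Ideal.span {F}).IsPrime],
    Nonempty ((IntermediateField.adjoin k (invDegZeroFrac F A)) ≃ₐ[k]
      FractionRing (MvPolynomial (Fin n) k))



/-- The part of a polynomial of total degree exactly `u` in the variables
`X_0, X_1, X_2`. -/
noncomputable def partXYZ {n : ℕ} (u : ℕ) (F : MvPolynomial (Fin (n + 2)) k) :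
    MvPolynomial (Fin (n + 2)) k :=
  ∑ m ∈ F.support.filter (fun m => m 0 + m 1 + m 2 = u),
    monomial m (coeff m F)

/-- The set of degree-zero fractions `G/H` (with `G`, `H` homogeneous of the same degree)
in the total fraction field of `k[X_0,…,X_{N-1}]/(F)`; this is (the carrier of) the
function field of the hypersurface `F = 0`. -/
def degZeroFrac {N : ℕ} (F : MvPolynomial (Fin N) k) :
    Set (FractionRing (MvPolynomial (Fin N) k ⧸ Ideal.span {F})) :=
  {x | ∃ (u : ℕ) (G H : MvPolynomial (Fin N) k),
    G.IsHomogeneous u ∧ H.IsHomogeneous u ∧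
    toFrac F H ≠ 0 ∧ x * toFrac F H = toFrac F G}

/-- The set of fractions `L/M` with `L`, `M` linear forms vanishing at `v`, inside the
function field of the hypersurface `F = 0`; together with the constants these generate
the pullback of the function field of `ℙ^{N-2}` under the projection from the point `[v]`. -/
def projFromPointFrac {N : ℕ} (F : MvPolynomial (Fin N) k) (v : Fin N → k) :
    Set (FractionRing (MvPolynomial (Fin N) k ⧸ Ideal.span {F})) :=
  {x | ∃ L M : MvPolynomial (Fin N) k,
    L.IsHomogeneous 1 ∧ M.IsHomogeneous 1 ∧
    eval v L = 0 ∧ eval v M = 0 ∧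
    toFrac F M ≠ 0 ∧ x * toFrac F M = toFrac F L}

/-- The constants `k` inside the total fraction field of `k[X_0,…,X_{N-1}]/(F)`. -/
def constFrac {N : ℕ} (F : MvPolynomial (Fin N) k) :
    Set (FractionRing (MvPolynomial (Fin N) k ⧸ Ideal.span {F})) :=
  Set.range fun c : k => toFrac F (C c)


section Helpers
variable {k : Type*} [Field k]


lemma eval_line_monomial (m : Fin 4 →₀ ℕ) (c y z : k) :
    eval ![0, 0, y, z] (monomial m c) =
      if m 0 = 0 ∧ m 1 = 0 then c * y ^ m 2 * z ^ m 3 else 0 := by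
  classical
  rw [eval_monomial, Finsupp.prod_fintype _ _ (fun i => pow_zero _), Fin.prod_univ_four]
  simp only [Matrix.cons_val_zero, Matrix.cons_val_one, Matrix.head_cons,
    Matrix.cons_val_two, Matrix.tail_cons, Matrix.cons_val_three]
  by_cases h0 : m 0 = 0
  · by_cases h1 : m 1 = 0
    · simp [h0, h1]; ring
    · simp [h0, h1, zero_pow h1]
  · simp [h0, zero_pow h0]

lemma line_monomial (m : Fin 4 →₀ ℕ) (c : k) :
    aeval ![0, 0, Polynomial.X, 1] (monomial m c) =
      if m 0 = 0 ∧ m 1 = 0 then Polynomial.C c * Polynomial.X ^ m 2 else 0 := by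
  classical
  rw [aeval_monomial, Finsupp.prod_fintype _ _ (fun i => pow_zero _), Fin.prod_univ_four]
  simp only [Matrix.cons_val_zero, Matrix.cons_val_one, Matrix.head_cons,
    Matrix.cons_val_two, Matrix.tail_cons, Matrix.cons_val_three]
  by_cases h0 : m 0 = 0
  · by_cases h1 : m 1 = 0
    · simp [h0, h1, Polynomial.algebraMap_eq]
    · simp [h0, h1, zero_pow h1]
  · simp [h0, zero_pow h0]

lemma eval_line (Q : MvPolynomial (Fin 4) k) (y z : k) :
    eval ![0, 0, y, z] Q =
      ∑ m ∈ Q.support, if m 0 = 0 ∧ m 1 = 0 then coeff m Q * y ^ m 2 * z ^ m 3 else 0 := by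
  conv_lhs => rw [Q.as_sum, map_sum]
  exact Finset.sum_congr rfl fun m _ => eval_line_monomial m _ y z

lemma line_eq (Q : MvPolynomial (Fin 4) k) :
    aeval ![0, 0, Polynomial.X, 1] Q =
      ∑ m ∈ Q.support,
        if m 0 = 0 ∧ m 1 = 0 then Polynomial.C (coeff m Q) * Polynomial.X ^ m 2 else 0 := by
  conv_lhs => rw [Q.as_sum, map_sum]
  exact Finset.sum_congr rfl fun m _ => line_monomial m _

lemma deg4 {F : MvPolynomial (Fin 4) k} {d : ℕ} (hF : F.IsHomogeneous d)
    {m : Fin 4 →₀ ℕ} (h : coeff m F ≠ 0) : m 0 + m 1 + m 2 + m 3 = d := by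
  have := hF h
  simp only [Finsupp.weight_apply, Pi.one_apply, smul_eq_mul, mul_one] at this
  rw [Finsupp.sum_fintype _ _ (fun i => rfl), Fin.sum_univ_four] at this
  exact this

lemma eval_smul_homog {F : MvPolynomial (Fin 4) k} {d : ℕ} (hF : F.IsHomogeneous d)
    (c : k) (v : Fin 4 → k) : eval (c • v) F = c ^ d * eval v F := by
  rw [eval_eq' , eval_eq', Finset.mul_sum]
  refine Finset.sum_congr rfl fun m hm => ?_
  rw [Fin.prod_univ_four, Fin.prod_univ_four]
  have hd := deg4 hF (mem_support_iff.mp hm)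
  simp only [Pi.smul_apply, smul_eq_mul, mul_pow]
  rw [← hd, pow_add, pow_add, pow_add]
  ring


lemma matSubst_diag_monomial (a b : k) (m : Fin 4 →₀ ℕ) (c : k) :
    matSubst (Matrix.diagonal ![a, b, 1, 1]) (monomial m c) =
      monomial m (c * (a ^ m 0 * b ^ m 1)) := by
  classical
  have hf : ∀ i : Fin 4,
      (∑ j, (Matrix.diagonal ![a, b, 1, 1] : Matrix (Fin 4) (Fin 4) k) i j
        • (X j : MvPolynomial (Fin 4) k))
      = (![a, b, 1, 1] i : k) • (X i : MvPolynomial (Fin 4) k) := by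
    intro i
    rw [Fin.sum_univ_four]
    fin_cases i <;> simp [Matrix.diagonal_apply]
  show aeval _ _ = _
  rw [aeval_monomial, Finsupp.prod_fintype _ _ (fun i => pow_zero _), Fin.prod_univ_four]
  simp_rw [hf]
  rw [monomial_eq, Finsupp.prod_fintype _ _ (fun i => pow_zero _), Fin.prod_univ_four]
  simp only [Matrix.cons_val_zero, Matrix.cons_val_one, Matrix.head_cons, Matrix.cons_val_two,
    Matrix.tail_cons, Matrix.cons_val_three, one_smul, smul_pow, smul_eq_C_mul, map_mul,
    map_pow, one_pow, algebraMap_eq]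
  ring

lemma semi_coeff {F : MvPolynomial (Fin 4) k} {a b t : k}
    (h : matSubst (Matrix.diagonal ![a, b, 1, 1]) F = t • F) (m : Fin 4 →₀ ℕ) :
    a ^ m 0 * b ^ m 1 * coeff m F = t * coeff m F := by
  classical
  by_cases hm : m ∈ F.support
  · have h2 := congrArg (coeff m) h
    conv_lhs at h2 => rw [F.as_sum, map_sum]
    simp_rw [matSubst_diag_monomial] at h2
    rw [coeff_sum] at h2
    simp_rw [coeff_monomial] at h2
    rw [Finset.sum_ite_eq' F.support m, if_pos hm, coeff_smul, smul_eq_mul] at h2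
    rw [← h2]; ring
  · rw [notMem_support_iff.mp hm, mul_zero, mul_zero]

lemma tsub_single_ne (m : Fin 4 →₀ ℕ) {i j : Fin 4} (h : i ≠ j) :
    (m - Finsupp.single i 1 : Fin 4 →₀ ℕ) j = m j := by
  rw [Finsupp.tsub_apply, Finsupp.single_eq_of_ne' h, Nat.sub_zero]

lemma tsub_single_same (m : Fin 4 →₀ ℕ) (i : Fin 4) :
    (m - Finsupp.single i 1 : Fin 4 →₀ ℕ) i = m i - 1 := by
  rw [Finsupp.tsub_apply, Finsupp.single_eq_same]

lemma pow_helper (n : ℕ) (y : k) : y * ((n : k) * y ^ (n - 1)) = (n : k) * y ^ n := by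
  cases n with
  | zero => simp
  | succ n => rw [pow_succ]; push_cast; ring

lemma euler_line {F : MvPolynomial (Fin 4) k} {d : ℕ} (hF : F.IsHomogeneous d) (y z : k) :
    y * eval ![0, 0, y, z] (pderiv 2 F) + z * eval ![0, 0, y, z] (pderiv 3 F)
      = (d : k) * eval ![0, 0, y, z] F := by
  classical
  have h2 : eval ![0, 0, y, z] (pderiv 2 F) = ∑ m ∈ F.support,
      if m 0 = 0 ∧ m 1 = 0 then coeff m F * (m 2 : k) * y ^ (m 2 - 1) * z ^ m 3 else 0 := by
    conv_lhs => rw [F.as_sum, map_sum, map_sum]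
    refine Finset.sum_congr rfl fun m _ => ?_
    rw [pderiv_monomial, eval_line_monomial,
      tsub_single_ne m (show (2 : Fin 4) ≠ 0 by decide),
      tsub_single_ne m (show (2 : Fin 4) ≠ 1 by decide),
      tsub_single_same m 2,
      tsub_single_ne m (show (2 : Fin 4) ≠ 3 by decide)]
  have h3 : eval ![0, 0, y, z] (pderiv 3 F) = ∑ m ∈ F.support,
      if m 0 = 0 ∧ m 1 = 0 then coeff m F * (m 3 : k) * y ^ m 2 * z ^ (m 3 - 1) else 0 := by
    conv_lhs => rw [F.as_sum, map_sum, map_sum]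
    refine Finset.sum_congr rfl fun m _ => ?_
    rw [pderiv_monomial, eval_line_monomial,
      tsub_single_ne m (show (3 : Fin 4) ≠ 0 by decide),
      tsub_single_ne m (show (3 : Fin 4) ≠ 1 by decide),
      tsub_single_ne m (show (3 : Fin 4) ≠ 2 by decide),
      tsub_single_same m 3]
  rw [h2, h3, eval_line F y z, Finset.mul_sum, Finset.mul_sum, Finset.mul_sum,
    ← Finset.sum_add_distrib]
  refine Finset.sum_congr rfl fun m hm => ?_
  have hd := deg4 hF (mem_support_iff.mp hm)
  split_ifs with h
  · obtain ⟨h0, h1⟩ := h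
    have hmd : m 2 + m 3 = d := by omega
    have e2 := pow_helper (m 2) y
    have e3 := pow_helper (m 3) z
    calc y * (coeff m F * (m 2 : k) * y ^ (m 2 - 1) * z ^ m 3)
          + z * (coeff m F * (m 3 : k) * y ^ m 2 * z ^ (m 3 - 1))
        = coeff m F * z ^ m 3 * (y * ((m 2 : k) * y ^ (m 2 - 1)))
          + coeff m F * y ^ m 2 * (z * ((m 3 : k) * z ^ (m 3 - 1))) := by ring
      _ = coeff m F * z ^ m 3 * ((m 2 : k) * y ^ m 2)
          + coeff m F * y ^ m 2 * ((m 3 : k) * z ^ m 3) := by rw [e2, e3]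
      _ = ((m 2 : k) + (m 3 : k)) * (coeff m F * y ^ m 2 * z ^ m 3) := by ring
      _ = (d : k) * (coeff m F * y ^ m 2 * z ^ m 3) := by rw [← hmd]; push_cast; ring
  · simp

lemma eval_lineMap (Q : MvPolynomial (Fin 4) k) (c : k) :
    Polynomial.eval c (aeval ![0, 0, Polynomial.X, 1] Q) = eval ![0, 0, c, 1] Q := by
  rw [line_eq, eval_line, Polynomial.eval_finset_sum]
  refine Finset.sum_congr rfl fun m _ => ?_
  split_ifs <;> simp

lemma deriv_lineMap (Q : MvPolynomial (Fin 4) k) (c : k) :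
    Polynomial.eval c (Polynomial.derivative (aeval ![0, 0, Polynomial.X, 1] Q))
      = eval ![0, 0, c, 1] (pderiv 2 Q) := by
  classical
  conv_rhs => rw [Q.as_sum, map_sum, map_sum]
  rw [line_eq, map_sum, Polynomial.eval_finset_sum]
  refine Finset.sum_congr rfl fun m _ => ?_
  rw [pderiv_monomial, eval_line_monomial,
    tsub_single_ne m (show (2 : Fin 4) ≠ 0 by decide),
    tsub_single_ne m (show (2 : Fin 4) ≠ 1 by decide),
    tsub_single_same m 2,
    tsub_single_ne m (show (2 : Fin 4) ≠ 3 by decide),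
    apply_ite (Polynomial.derivative (R := k)),
    Polynomial.derivative_C_mul_X_pow, Polynomial.derivative_zero,
    apply_ite (Polynomial.eval c)]
  split_ifs with h
  · simp
  · simp

lemma coeff_lineMap_top {F : MvPolynomial (Fin 4) k} {d : ℕ} (hF : F.IsHomogeneous d) :
    Polynomial.coeff (aeval ![0, 0, Polynomial.X, 1] F) d = eval ![0, 0, (1 : k), 0] F := by
  classical
  rw [line_eq, Polynomial.finset_sum_coeff, eval_line]
  refine Finset.sum_congr rfl fun m hm => ?_
  have hd := deg4 hF (mem_support_iff.mp hm)
  rw [apply_ite (fun p => Polynomial.coeff p d)]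
  split_ifs with h
  · rw [Polynomial.coeff_C_mul, Polynomial.coeff_X_pow]
    obtain ⟨h0, h1⟩ := h
    by_cases h3 : m 3 = 0
    · rw [if_pos (by omega), h3]; simp
    · rw [if_neg (by omega), zero_pow h3]; ring
  · simp

lemma coeff_lineMap_sub1 {F : MvPolynomial (Fin 4) k} {d : ℕ} (hF : F.IsHomogeneous d)
    (hd1 : 1 ≤ d) :
    Polynomial.coeff (aeval ![0, 0, Polynomial.X, 1] F) (d - 1)
      = eval ![0, 0, (1 : k), 0] (pderiv 3 F) := by
  classical
  conv_rhs => rw [F.as_sum, map_sum, map_sum]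
  rw [line_eq, Polynomial.finset_sum_coeff]
  refine Finset.sum_congr rfl fun m hm => ?_
  have hdm := deg4 hF (mem_support_iff.mp hm)
  rw [pderiv_monomial, eval_line_monomial,
    tsub_single_ne m (show (3 : Fin 4) ≠ 0 by decide),
    tsub_single_ne m (show (3 : Fin 4) ≠ 1 by decide),
    tsub_single_ne m (show (3 : Fin 4) ≠ 2 by decide),
    tsub_single_same m 3,
    apply_ite (fun p => Polynomial.coeff p (d - 1)), Polynomial.coeff_C_mul,
    Polynomial.coeff_X_pow, Polynomial.coeff_zero]
  split_ifs with h hx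
  · obtain ⟨h0, h1⟩ := h
    have h31 : m 3 = 1 := by omega
    rw [h31]; norm_num
  · obtain ⟨h0, h1⟩ := h
    by_cases h30 : m 3 = 0
    · rw [h30]; norm_num
    · rw [zero_pow (show m 3 - 1 ≠ 0 by omega)]; ring
  · rfl

lemma vanish0 {F : MvPolynomial (Fin 4) k} {a b : k}
    (hsemi : ∀ m : Fin 4 →₀ ℕ, a ^ m 0 * b ^ m 1 * coeff m F = coeff m F)
    (ha : a ≠ 1) (y z : k) : eval ![0, 0, y, z] (pderiv 0 F) = 0 := by
  classical
  conv_lhs => rw [F.as_sum, map_sum, map_sum]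
  refine Finset.sum_eq_zero fun m hm => ?_
  rw [pderiv_monomial, eval_line_monomial,
    tsub_single_same m 0,
    tsub_single_ne m (show (0 : Fin 4) ≠ 1 by decide),
    tsub_single_ne m (show (0 : Fin 4) ≠ 2 by decide),
    tsub_single_ne m (show (0 : Fin 4) ≠ 3 by decide)]
  split_ifs with h
  · obtain ⟨h0, h1⟩ := h
    by_cases hm0 : m 0 = 0
    · simp [hm0]
    · have h01 : m 0 = 1 := by omega
      have hs := hsemi m
      rw [h01, h1, pow_one, pow_zero, mul_one] at hs
      have hc : coeff m F = 0 := by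
        by_contra hc
        exact ha (mul_right_cancel₀ hc (by rw [one_mul]; exact hs))
      simp [hc]
  · rfl

lemma vanish1 {F : MvPolynomial (Fin 4) k} {a b : k}
    (hsemi : ∀ m : Fin 4 →₀ ℕ, a ^ m 0 * b ^ m 1 * coeff m F = coeff m F)
    (hb : b ≠ 1) (y z : k) : eval ![0, 0, y, z] (pderiv 1 F) = 0 := by
  classical
  conv_lhs => rw [F.as_sum, map_sum, map_sum]
  refine Finset.sum_eq_zero fun m hm => ?_
  rw [pderiv_monomial, eval_line_monomial,
    tsub_single_ne m (show (1 : Fin 4) ≠ 0 by decide),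
    tsub_single_same m 1,
    tsub_single_ne m (show (1 : Fin 4) ≠ 2 by decide),
    tsub_single_ne m (show (1 : Fin 4) ≠ 3 by decide)]
  split_ifs with h
  · obtain ⟨h0, h1⟩ := h
    by_cases hm1 : m 1 = 0
    · simp [hm1]
    · have h11 : m 1 = 1 := by omega
      have hs := hsemi m
      rw [h11, h0, pow_one, pow_zero, one_mul] at hs
      have hc : coeff m F = 0 := by
        by_contra hc
        exact hb (mul_right_cancel₀ hc (by rw [one_mul]; exact hs))
      simp [hc]
  · rfl

end Helpers

theorem statement_10 {k : Type*} [Field k] [IsAlgClosed k] [CharZero k]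
    {d : ℕ}
    (F : MvPolynomial (Fin 4) k) (hF : IsSmoothHypersurface F d)
    (a b : k) (ha0 : a ≠ 0) (ha1 : a ≠ 1) (hb0 : b ≠ 0) (hb1 : b ≠ 1) (hab : a ≠ b)
    (A : Matrix (Fin 4) (Fin 4) k)
    (hA : A = Matrix.diagonal ![a, b, 1, 1])
    (hauto : ∃ t : k, t ≠ 0 ∧ matSubst A F = t • F) :
    (d : ℕ∞) ≤ (projFixedPoints F A).encard := by
  classical
  obtain ⟨hhom, hirr, hsmooth⟩ := hF
  obtain ⟨t, ht0, hsub⟩ := hauto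
  subst hA
  have hvne : ∀ c : k, (![0, 0, c, 1] : Fin 4 → k) ≠ 0 := by
    intro c hc
    have := congrFun hc 3
    simp at this
  have hvinf : (![0, 0, (1 : k), 0] : Fin 4 → k) ≠ 0 := by
    intro hc
    have := congrFun hc 2
    simp at this
  have hmem : ∀ (v : Fin 4 → k) (hv : v ≠ 0), v 0 = 0 → v 1 = 0 → eval v F = 0 →
      Projectivization.mk k v hv ∈ projFixedPoints F (Matrix.diagonal ![a, b, 1, 1]) := by
    intro v hv h0 h1 hev
    obtain ⟨u, hu⟩ := Projectivization.exists_smul_eq_mk_rep k v hv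
    have hrep : (Projectivization.mk k v hv).rep = (u : k) • v := by
      rw [← hu, Units.smul_def]
    have hAv : (Matrix.diagonal ![a, b, 1, 1]).mulVec v = v := by
      funext i
      rw [Matrix.mulVec_diagonal]
      fin_cases i <;> simp [h0, h1]
    refine ⟨?_, 1, ?_⟩
    · show eval (Projectivization.mk k v hv).rep F = 0
      rw [hrep, eval_smul_homog hhom, hev, mul_zero]
    · rw [hrep, Matrix.mulVec_smul, hAv, one_smul]
  have hPinj : Function.Injective
      (fun c : k => Projectivization.mk k ![0, 0, c, 1] (hvne c)) := by
    intro c c' h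
    simp only at h
    rw [Projectivization.mk_eq_mk_iff] at h
    obtain ⟨u, hu⟩ := h
    have h3 := congrFun hu 3
    have h2 := congrFun hu 2
    simp [Units.smul_def] at h3 h2
    rw [h3] at h2
    simpa using h2.symm
  have hPne : ∀ c : k, Projectivization.mk k ![0, 0, c, 1] (hvne c)
      ≠ Projectivization.mk k ![0, 0, 1, 0] hvinf := by
    intro c h
    rw [Projectivization.mk_eq_mk_iff] at h
    obtain ⟨u, hu⟩ := h
    have h3 := congrFun hu 3
    simp [Units.smul_def] at h3
  rcases Nat.eq_zero_or_pos d with rfl | hd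
  · simp
  set g : Polynomial k := aeval ![0, 0, Polynomial.X, 1] F with hg
  by_cases hg0 : g = 0
  · obtain ⟨T, -, hTcard⟩ := Set.Infinite.exists_subset_card_eq (Set.infinite_univ (α := k)) d
    set S : Finset (Projectivization k (Fin 4 → k)) :=
      T.image (fun c => Projectivization.mk k ![0, 0, c, 1] (hvne c)) with hS
    have hSsub : (S : Set (Projectivization k (Fin 4 → k)))
        ⊆ projFixedPoints F (Matrix.diagonal ![a, b, 1, 1]) := by
      intro P hP
      simp only [hS, Finset.coe_image, Set.mem_image, Finset.mem_coe] at hP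
      obtain ⟨c, -, rfl⟩ := hP
      refine hmem _ _ (by simp) (by simp) ?_
      rw [← eval_lineMap, ← hg, hg0, Polynomial.eval_zero]
    calc (d : ℕ∞) = S.card := by
          rw [hS, Finset.card_image_of_injective _ hPinj, hTcard]
      _ = (S : Set (Projectivization k (Fin 4 → k))).encard :=
          (Set.encard_coe_eq_coe_finsetCard S).symm
      _ ≤ _ := Set.encard_le_encard hSsub
  · have hex : ∃ m : Fin 4 →₀ ℕ, m 0 = 0 ∧ m 1 = 0 ∧ coeff m F ≠ 0 := by
      by_contra hno
      push_neg at hno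
      apply hg0
      rw [hg, line_eq]
      refine Finset.sum_eq_zero fun m hm => ?_
      split_ifs with h
      · rw [hno m h.1 h.2, map_zero, zero_mul]
      · rfl
    obtain ⟨m₀, hm₀0, hm₀1, hmne⟩ := hex
    have hsemi' := semi_coeff hsub
    have ht1 : t = 1 := by
      have hx := hsemi' m₀
      rw [hm₀0, hm₀1, pow_zero, pow_zero, one_mul, one_mul] at hx
      exact (mul_right_cancel₀ hmne (show t * coeff m₀ F = 1 * coeff m₀ F by
        rw [one_mul, ← hx])).symm ▸ rfl
    have hsemi1 : ∀ m : Fin 4 →₀ ℕ, a ^ m 0 * b ^ m 1 * coeff m F = coeff m F := by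
      intro m
      rw [hsemi' m, ht1, one_mul]
    have hsimple : ∀ c : k, g.IsRoot c → ¬(Polynomial.derivative g).IsRoot c := by
      intro c hr hdr
      have hFv : eval ![0, 0, c, 1] F = 0 := by rw [← eval_lineMap]; exact hr
      have hp2 : eval ![0, 0, c, 1] (pderiv 2 F) = 0 := by
        rw [← deriv_lineMap]; exact hdr
      have heuler := euler_line hhom c 1
      rw [hFv, hp2, mul_zero, mul_zero, zero_add, one_mul] at heuler
      obtain ⟨i, hi⟩ := hsmooth ![0, 0, c, 1] (hvne c)
      fin_cases i
      · exact hi (vanish0 hsemi1 ha1 c 1)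
      · exact hi (vanish1 hsemi1 hb1 c 1)
      · exact hi hp2
      · exact hi heuler
    have hnodup : g.roots.Nodup := by
      rw [Multiset.nodup_iff_count_le_one]
      intro c
      rw [Polynomial.count_roots]
      by_contra hcount
      push_neg at hcount
      rw [Polynomial.one_lt_rootMultiplicity_iff_isRoot hg0] at hcount
      exact hsimple c hcount.1 hcount.2
    have hcard : g.roots.toFinset.card = g.natDegree := by
      rw [Multiset.toFinset_card_of_nodup hnodup,
        Polynomial.splits_iff_card_roots.mp (IsAlgClosed.splits g)]
    set S₀ : Finset (Projectivization k (Fin 4 → k)) :=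
      g.roots.toFinset.image (fun c => Projectivization.mk k ![0, 0, c, 1] (hvne c)) with hS₀
    have hS₀card : S₀.card = g.natDegree := by
      rw [hS₀, Finset.card_image_of_injective _ hPinj, hcard]
    have hS₀sub : (S₀ : Set (Projectivization k (Fin 4 → k)))
        ⊆ projFixedPoints F (Matrix.diagonal ![a, b, 1, 1]) := by
      intro P hP
      simp only [hS₀, Finset.coe_image, Set.mem_image, Finset.mem_coe,
        Multiset.mem_toFinset] at hP
      obtain ⟨c, hc, rfl⟩ := hP
      refine hmem _ _ (by simp) (by simp) ?_
      rw [← eval_lineMap, ← hg]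
      exact Polynomial.isRoot_of_mem_roots hc
    by_cases hinf : eval ![0, 0, (1 : k), 0] F = 0
    · have hp2inf : eval ![0, 0, (1 : k), 0] (pderiv 2 F) = 0 := by
        have heuler := euler_line hhom 1 0
        rw [hinf, mul_zero, zero_mul, add_zero, one_mul] at heuler
        exact heuler
      have hp3inf : eval ![0, 0, (1 : k), 0] (pderiv 3 F) ≠ 0 := by
        obtain ⟨i, hi⟩ := hsmooth ![0, 0, (1 : k), 0] hvinf
        fin_cases i
        · exact (hi (vanish0 hsemi1 ha1 1 0)).elim
        · exact (hi (vanish1 hsemi1 hb1 1 0)).elim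
        · exact (hi hp2inf).elim
        · exact hi
      have hdeg : d - 1 ≤ g.natDegree := by
        refine Polynomial.le_natDegree_of_ne_zero ?_
        rw [hg, coeff_lineMap_sub1 hhom hd]
        exact hp3inf
      set S : Finset (Projectivization k (Fin 4 → k)) :=
        insert (Projectivization.mk k ![0, 0, (1 : k), 0] hvinf) S₀ with hS
      have hnm : Projectivization.mk k ![0, 0, (1 : k), 0] hvinf ∉ S₀ := by
        intro hmemS
        simp only [hS₀, Finset.mem_image, Multiset.mem_toFinset] at hmemS
        obtain ⟨c, -, hc⟩ := hmemS
        exact hPne c hc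
      have hScard : d ≤ S.card := by
        rw [hS, Finset.card_insert_of_notMem hnm]
        omega
      have hSsub : (S : Set (Projectivization k (Fin 4 → k)))
          ⊆ projFixedPoints F (Matrix.diagonal ![a, b, 1, 1]) := by
        intro P hP
        rw [hS] at hP
        simp only [Finset.coe_insert, Set.mem_insert_iff] at hP
        rcases hP with rfl | hP
        · exact hmem _ _ (by simp) (by simp) hinf
        · exact hS₀sub hP
      calc (d : ℕ∞) ≤ (S.card : ℕ∞) := by exact_mod_cast hScard
        _ = (S : Set (Projectivization k (Fin 4 → k))).encard :=
            (Set.encard_coe_eq_coe_finsetCard S).symm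
        _ ≤ _ := Set.encard_le_encard hSsub
    · have hdeg : d ≤ g.natDegree := by
        refine Polynomial.le_natDegree_of_ne_zero ?_
        rw [hg, coeff_lineMap_top hhom]
        exact hinf
      have hScard : d ≤ S₀.card := by omega
      calc (d : ℕ∞) ≤ (S₀.card : ℕ∞) := by exact_mod_cast hScard
        _ = (S₀ : Set (Projectivization k (Fin 4 → k))).encard :=
            (Set.encard_coe_eq_coe_finsetCard S₀).symm
        _ ≤ _ := Set.encard_le_encard hS₀sub
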